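/- arXiv:math/0606110 — 4 statements merged into one kernel-verified Lean document; each statement's English description precedes it below -/
import Mathlib

section
/- Let G be a finite group and M a G-lattice. The inclusion M^G ⊆ M induces by restriction an injective homomorphism (Hom_ℤ(M,ℤ))^G → Hom_ℤ(M^G,ℤ), and the cokernel of this homomorphism is finite. -/
/-!
Let `N m = ∑ g, g • m` be the norm map `M → M^G`. Precomposition with `N` sends `Hom(M^G, ℤ)` to
invariant functionals, and composing it with restriction in either order is multiplication by `|G|`.
As `Hom(M, ℤ)` is torsion-free, restriction is injective; its cokernel is finitely generated and
killed by `|G|`, hence finite.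
-/

theorem AddGroup.fg_of_injective {A B : Type*} [AddCommGroup A] [AddCommGroup B] [AddGroup.FG B]
    (f : A →+ B) (hf : Function.Injective f) : AddGroup.FG A := by
  rw [← Module.Finite.iff_addGroup_fg] at *
  have : IsNoetherian ℤ B := isNoetherian_of_isNoetherianRing_of_finite ℤ B
  exact Module.Finite.of_injective f.toIntLinearMap hf

theorem AddGroup.fg_of_module_finite_int (M : Type*) [AddCommGroup M] [inst : Module ℤ M]
    [Module.Finite ℤ M] : AddGroup.FG M := by
  obtain rfl : inst = AddCommGroup.toIntModule M := Subsingleton.elim _ _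
  exact Module.Finite.iff_addGroup_fg.mp ‹_›

instance AddSubgroup.addGroupFG {A : Type*} [AddCommGroup A] [AddGroup.FG A] (H : AddSubgroup A) :
    AddGroup.FG H :=
  AddGroup.fg_of_injective H.subtype H.subtype_injective

instance AddMonoidHom.addGroupFG {A B : Type*} [AddCommGroup A] [AddCommGroup B] [AddGroup.FG A]
    [AddGroup.FG B] : AddGroup.FG (A →+ B) := by
  obtain ⟨s, hs⟩ := AddGroup.FG.out (H := A)
  refine AddGroup.fg_of_injective (AddMonoidHom.pi fun a : s => AddMonoidHom.eval (a : A)) ?_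
  intro f g hfg
  exact AddMonoidHom.eq_of_eqOn_dense hs fun a ha => congrFun hfg ⟨a, ha⟩

theorem AddSubgroup.finite_quotient_of_nsmul_mem {B : Type*} [AddCommGroup B] [AddGroup.FG B]
    (H : AddSubgroup B) {n : ℕ} (hn : n ≠ 0) (h : ∀ b, n • b ∈ H) : Finite (B ⧸ H) := by
  refine AddCommGroup.finite_of_fg_isAddTorsion _ fun x => ?_
  obtain ⟨b, rfl⟩ := QuotientAddGroup.mk_surjective x
  exact isOfFinAddOrder_iff_nsmul_eq_zero.mpr
    ⟨n, Nat.pos_of_ne_zero hn, (QuotientAddGroup.eq_zero_iff _).mpr (h b)⟩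

instance AddMonoidHom.isAddTorsionFree {A B : Type*} [AddZeroClass A] [AddCommMonoid B]
    [IsAddTorsionFree B] : IsAddTorsionFree (A →+ B) where
  nsmul_right_injective _ hn _ _ h :=
    AddMonoidHom.ext fun a => nsmul_right_injective hn (DFunLike.congr_fun h a)

instance AddSubgroup.isAddTorsionFree {A : Type*} [AddGroup A] [IsAddTorsionFree A]
    (H : AddSubgroup A) : IsAddTorsionFree H where
  nsmul_right_injective _ hn _ _ h :=
    Subtype.ext (nsmul_right_injective hn (congrArg Subtype.val h))

namespace FixedPoints

variable (G M : Type*) [Group G] [Fintype G] [AddCommGroup M] [DistribMulAction G M]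

theorem sum_smul_mem_addSubgroup (m : M) : ∑ g : G, g • m ∈ addSubgroup G M := fun g => by
  simp only [Finset.smul_sum, smul_smul]
  exact Equiv.sum_comp (Equiv.mulLeft g) (· • m)

def norm : M →+ addSubgroup G M :=
  AddMonoidHom.codRestrict
    { toFun m := ∑ g : G, g • m
      map_zero' := by simp
      map_add' _ _ := by simp [Finset.sum_add_distrib] }
    _ (sum_smul_mem_addSubgroup G M)

variable {G M}

@[simp]
theorem coe_norm (m : M) : (norm G M m : M) = ∑ g : G, g • m := rfl

theorem norm_smul (g : G) (m : M) : norm G M (g • m) = norm G M m := by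
  ext
  simp only [coe_norm, smul_smul]
  exact Equiv.sum_comp (Equiv.mulRight g) (· • m)

theorem norm_coe (m : addSubgroup G M) : norm G M m = Fintype.card G • m := by
  ext
  have hm : ∀ g : G, g • (m : M) = m := m.2
  simp [hm]

theorem apply_norm {A : Type*} [AddCommMonoid A] (φ : M →+ A)
    (hφ : ∀ (g : G) (m : M), φ (g • m) = φ m) (m : M) :
    φ (norm G M m) = Fintype.card G • φ m := by
  simp [hφ]

end FixedPoints

theorem stmt1_general {G M : Type*} [Group G] [Finite G]
    [AddCommGroup M] [Module ℤ M] [Module.Finite ℤ M]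
    [DistribMulAction G M]
    (MG : AddSubgroup M) (hMG : ∀ m : M, m ∈ MG ↔ ∀ g : G, g • m = m)
    (S : AddSubgroup (M →+ ℤ))
    (hS : ∀ φ : M →+ ℤ, φ ∈ S ↔ ∀ (g : G) (m : M), φ (g • m) = φ m)
    (res : S →+ (MG →+ ℤ))
    (hres : ∀ (φ : S) (m : MG), res φ m = (φ : M →+ ℤ) (m : M)) :
    Function.Injective res ∧ Finite ((MG →+ ℤ) ⧸ res.range) := by
  have := Fintype.ofFinite G
  obtain rfl : MG = FixedPoints.addSubgroup G M := AddSubgroup.ext hMG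
  have := AddGroup.fg_of_module_finite_int M
  let transfer : (FixedPoints.addSubgroup G M →+ ℤ) →+ S :=
    ((FixedPoints.norm G M).compHom' (P := ℤ)).codRestrict S fun ψ =>
      (hS _).mpr fun g m => congrArg ψ (FixedPoints.norm_smul g m)
  have transfer_res (φ : S) : transfer (res φ) = Fintype.card G • φ := by
    ext m
    change res φ (FixedPoints.norm G M m) = _
    rw [hres, FixedPoints.apply_norm _ ((hS φ).mp φ.2)]
    rfl
  have res_transfer (ψ : FixedPoints.addSubgroup G M →+ ℤ) :
      res (transfer ψ) = Fintype.card G • ψ := by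
    ext m
    rw [hres]
    exact congrArg ψ (FixedPoints.norm_coe m) |>.trans (map_nsmul ψ _ _)
  have hn : Fintype.card G ≠ 0 := Fintype.card_ne_zero
  refine ⟨Function.Injective.of_comp (f := transfer) ?_,
    res.range.finite_quotient_of_nsmul_mem hn fun ψ => ⟨transfer ψ, res_transfer ψ⟩⟩
  convert nsmul_right_injective (M := S) hn using 1
  exact funext transfer_res

/-- For a `G`-lattice `M`, restriction to `M^G` gives an injective map
`(Hom_ℤ(M,ℤ))^G → Hom_ℤ(M^G, ℤ)` with finite cokernel. -/
theorem stmt1 {G M : Type*} [Group G] [Finite G]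
    [AddCommGroup M] [Module ℤ M] [Module.Free ℤ M] [Module.Finite ℤ M]
    [DistribMulAction G M]
    (MG : AddSubgroup M) (hMG : ∀ m : M, m ∈ MG ↔ ∀ g : G, g • m = m)
    (S : AddSubgroup (M →+ ℤ))
    (hS : ∀ φ : M →+ ℤ, φ ∈ S ↔ ∀ (g : G) (m : M), φ (g • m) = φ m)
    (res : S →+ (MG →+ ℤ))
    (hres : ∀ (φ : S) (m : MG), res φ m = (φ : M →+ ℤ) (m : M)) :
    Function.Injective res ∧ Finite ((MG →+ ℤ) ⧸ res.range) :=
  stmt1_general MG hMG S hS res hres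
end

section
/- Let G = ⟨σ,τ⟩ ≅ ℤ/2 × ℤ/2 and let T_* ⊆ ℤ[G] ⊕ I_G be the kernel of (t,x) ↦ (σt − t − x − τx, τt − t − x − σx). Then there is a short exact sequence of G-modules 0 → ℤ → T_* → I_G → 0, where ℤ (with trivial G-action) maps to T_* by 1 ↦ (N_G, 0) with N_G = 1 + σ + τ + στ, and T_* → I_G is the restriction of the projection ℤ[G] ⊕ I_G → I_G onto the second factor; in particular this projection restricted to T_* is surjective with kernel exactly ℤ·(N_G, 0). -/
noncomputable section


/-- The Klein four group, written multiplicatively. -/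
abbrev K4 : Type := Multiplicative (ZMod 2 × ZMod 2)

/-- The generator σ of the Klein four group, as an element of the group ring `ℤ[G]`. -/
def sg : MonoidAlgebra ℤ K4 := MonoidAlgebra.of ℤ K4 (Multiplicative.ofAdd (1, 0))

/-- The generator τ of the Klein four group, as an element of the group ring `ℤ[G]`. -/
def tg : MonoidAlgebra ℤ K4 := MonoidAlgebra.of ℤ K4 (Multiplicative.ofAdd (0, 1))

/-- The augmentation `ε : ℤ[G] → ℤ`, sending each group element to `1`;
`I_G = ker ε` is the augmentation ideal. -/
def eps : MonoidAlgebra ℤ K4 →ₐ[ℤ] ℤ := MonoidAlgebra.lift ℤ ℤ K4 1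

/-- The norm element N_G = 1 + σ + τ + στ of ℤ[G]. -/
def NG : MonoidAlgebra ℤ K4 := 1 + sg + tg + sg * tg

-- auxiliary lemmas

lemma aux_hs : sg * sg = 1 := by
  rw [sg, ← map_mul]
  norm_num [← ofAdd_add]
  rfl

lemma aux_ht : tg * tg = 1 := by
  rw [tg, ← map_mul]
  norm_num [← ofAdd_add]
  rfl

lemma aux_st : sg * tg = MonoidAlgebra.of ℤ K4 (Multiplicative.ofAdd (1,1)) := by
  rw [sg, tg, ← map_mul]
  norm_num [← ofAdd_add]

lemma aux_add_apply (x y : MonoidAlgebra ℤ K4) (g : K4) : (x + y).coeff g = x.coeff g + y.coeff g :=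
  Finsupp.add_apply x.coeff y.coeff g

lemma aux_smul_apply (n : ℤ) (x : MonoidAlgebra ℤ K4) (g : K4) : (n • x).coeff g = n * x.coeff g := by
  classical
  exact Finsupp.smul_apply n x.coeff g

lemma aux_single_apply (g h : K4) (b : ℤ) :
    (MonoidAlgebra.single g b).coeff h = if g = h then b else 0 := by
  classical
  exact Finsupp.single_apply

lemma aux_one : (1 : MonoidAlgebra ℤ K4) = MonoidAlgebra.single 1 1 := rfl

lemma aux_sg : sg = MonoidAlgebra.single (Multiplicative.ofAdd ((1:ZMod 2), (0:ZMod 2))) 1 := rfl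
lemma aux_tg : tg = MonoidAlgebra.single (Multiplicative.ofAdd ((0:ZMod 2), (1:ZMod 2))) 1 := rfl
lemma aux_stg : sg * tg =
    MonoidAlgebra.single (Multiplicative.ofAdd ((1:ZMod 2), (1:ZMod 2))) 1 := by
  rw [aux_st]; rfl

lemma aux_decomp (x : MonoidAlgebra ℤ K4) :
    x = x.coeff (Multiplicative.ofAdd (0,0)) • (1 : MonoidAlgebra ℤ K4)
      + x.coeff (Multiplicative.ofAdd (1,0)) • sg
      + x.coeff (Multiplicative.ofAdd (0,1)) • tg
      + x.coeff (Multiplicative.ofAdd (1,1)) • (sg * tg) := by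
  refine MonoidAlgebra.ext (Finsupp.ext fun g => ?_)
  have hg : g = Multiplicative.ofAdd (0,0) ∨ g = Multiplicative.ofAdd (1,0) ∨
      g = Multiplicative.ofAdd (0,1) ∨ g = Multiplicative.ofAdd (1,1) := by
    revert g; decide
  rcases hg with rfl | rfl | rfl | rfl <;>
    simp (config := { decide := true }) [aux_add_apply, aux_smul_apply, aux_single_apply,
      aux_one, aux_sg, aux_tg, aux_stg, Finsupp.single_apply]

lemma aux_eps_sg : eps sg = 1 := by simp [eps, sg]
lemma aux_eps_tg : eps tg = 1 := by simp [eps, tg]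
lemma aux_eps_NG : eps NG = 4 := by simp [eps, NG, sg, tg]

/-- With `T_* = ker((t,x) ↦ (σt−t−x−τx, τt−t−x−σx)) ⊆ ℤ[G] ⊕ I_G`,
there is a short exact sequence `0 → ℤ → T_* → I_G → 0` where `1 ↦ (N_G, 0)` and
`T_* → I_G` is the second projection: (i) `(N_G,0) ∈ T_*`; (ii) `ℤ → T_*` is injective;
(iii) the kernel of the projection `T_* → I_G` is exactly `ℤ·(N_G,0)`;
(iv) the projection `T_* → I_G` is surjective. -/
theorem stmt5 :
    (sg * NG - NG - 0 - tg * 0 = 0 ∧ tg * NG - NG - 0 - sg * 0 = 0 ∧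
      eps (0 : MonoidAlgebra ℤ K4) = 0) ∧
    (∀ n : ℤ, n • NG = 0 → n = 0) ∧
    (∀ t x : MonoidAlgebra ℤ K4, eps x = 0 →
      sg * t - t - x - tg * x = 0 → tg * t - t - x - sg * x = 0 →
      x = 0 → ∃ n : ℤ, t = n • NG) ∧
    (∀ x : MonoidAlgebra ℤ K4, eps x = 0 →
      ∃ t : MonoidAlgebra ℤ K4,
        sg * t - t - x - tg * x = 0 ∧ tg * t - t - x - sg * x = 0) := by
  refine ⟨⟨?_, ?_, map_zero _⟩, ?_, ?_, ?_⟩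
  · rw [NG]; linear_combination (1 + tg) * aux_hs
  · rw [NG]; linear_combination (1 + sg) * aux_ht
  · -- injectivity
    intro n hn
    have h := congrArg eps hn
    rw [map_zero, map_zsmul, aux_eps_NG, smul_eq_mul] at h
    omega
  · -- kernel
    intro t x _ h1 h2 hx
    subst hx
    have hst : sg * t = t := by linear_combination h1
    have htt : tg * t = t := by linear_combination h2
    -- coefficients are constant
    have key : ∀ g y : K4, g = Multiplicative.ofAdd (1,0) ∨ g = Multiplicative.ofAdd (0,1) →
        t.coeff (g * y) = t.coeff y := by
      rintro g y (rfl | rfl)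
      · have := congrArg (fun z : MonoidAlgebra ℤ K4 => z.coeff y) hst
        simpa [aux_sg, MonoidAlgebra.coeff_single_mul_apply, show
          (Multiplicative.ofAdd ((1:ZMod 2), (0:ZMod 2)))⁻¹ =
            Multiplicative.ofAdd ((1:ZMod 2), (0:ZMod 2)) by decide] using this
      · have := congrArg (fun z : MonoidAlgebra ℤ K4 => z.coeff y) htt
        simpa [aux_tg, MonoidAlgebra.coeff_single_mul_apply, show
          (Multiplicative.ofAdd ((0:ZMod 2), (1:ZMod 2)))⁻¹ =
            Multiplicative.ofAdd ((0:ZMod 2), (1:ZMod 2)) by decide] using this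
    refine ⟨t.coeff (Multiplicative.ofAdd (0,0)), ?_⟩
    have e1 : t.coeff (Multiplicative.ofAdd (1,0)) = t.coeff (Multiplicative.ofAdd (0,0)) := by
      have := key (Multiplicative.ofAdd (1,0)) (Multiplicative.ofAdd (0,0)) (Or.inl rfl)
      simpa [← ofAdd_add] using this
    have e2 : t.coeff (Multiplicative.ofAdd (0,1)) = t.coeff (Multiplicative.ofAdd (0,0)) := by
      have := key (Multiplicative.ofAdd (0,1)) (Multiplicative.ofAdd (0,0)) (Or.inr rfl)
      simpa [← ofAdd_add] using this
    have e3 : t.coeff (Multiplicative.ofAdd (1,1)) = t.coeff (Multiplicative.ofAdd (0,0)) := by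
      have h4 := key (Multiplicative.ofAdd (1,0)) (Multiplicative.ofAdd (0,1)) (Or.inl rfl)
      have h5 : (Multiplicative.ofAdd ((1:ZMod 2),(0:ZMod 2))) *
          (Multiplicative.ofAdd ((0:ZMod 2),(1:ZMod 2))) = Multiplicative.ofAdd (1,1) := by decide
      rw [h5] at h4
      rw [h4, e2]
    calc t = t.coeff (Multiplicative.ofAdd (0,0)) • (1 : MonoidAlgebra ℤ K4)
          + t.coeff (Multiplicative.ofAdd (1,0)) • sg
          + t.coeff (Multiplicative.ofAdd (0,1)) • tg
          + t.coeff (Multiplicative.ofAdd (1,1)) • (sg * tg) := aux_decomp t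
      _ = t.coeff (Multiplicative.ofAdd (0,0)) • NG := by
          rw [e1, e2, e3, NG]; module
  · -- surjectivity
    intro x hx
    set a := x.coeff (Multiplicative.ofAdd (0,0)) with ha'
    set b := x.coeff (Multiplicative.ofAdd (1,0)) with hb'
    set c := x.coeff (Multiplicative.ofAdd (0,1)) with hc'
    set d := x.coeff (Multiplicative.ofAdd (1,1)) with hd'
    have hxd : x = a • (1 : MonoidAlgebra ℤ K4) + b • sg + c • tg + d • (sg * tg) :=
      aux_decomp x
    have ha : a + b + c + d = 0 := by
      have := congrArg eps hxd
      rw [hx] at this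
      simp only [map_add, map_zsmul, map_one, aux_eps_sg, aux_eps_tg, map_mul,
        smul_eq_mul, mul_one, one_mul] at this
      linarith [this]
    have hA : (a : MonoidAlgebra ℤ K4) + b + c + d = 0 := by
      have := congrArg (fun z : ℤ => (z : MonoidAlgebra ℤ K4)) ha
      push_cast at this
      simpa using this
    refine ⟨-((b+d) • sg + (c+d) • tg + (b+c+2*d) • (sg * tg)), ?_, ?_⟩
    · rw [hxd]
      simp only [zsmul_eq_mul]
      push_cast
      linear_combination (-(↑b+↑d) - (↑b+↑c+2*↑d)*tg) * aux_hs + (-↑c - ↑d*sg) * aux_ht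
        + (-(1 : MonoidAlgebra ℤ K4) - tg) * hA
    · rw [hxd]
      simp only [zsmul_eq_mul]
      push_cast
      linear_combination (-↑b - ↑d*tg) * aux_hs + (-(↑c+↑d) - (↑b+↑c+2*↑d)*sg) * aux_ht
        + (-(1 : MonoidAlgebra ℤ K4) - sg) * hA
end
end

section
/- Let K be a nonarchimedean local field with residue characteristic ≠ 2, containing i with i² = −1; let π be a uniformizer, u a non-square unit, L = K(√π, √u) with Galois group G = ⟨σ,τ⟩ as above, and w the normalized valuation of L. Then every element of L× of the form α · ((1+τ)σβ) · ((1+σ)τγ) := α · σ(β)·τσ(β) · τ(γ)·στ(γ) with α ∈ K× and β, γ ∈ L× has even valuation w, whereas √(uπ) ∈ L× has w(√(uπ)) = 1. Consequently √(uπ) is not of this form, even up to multiplication by a unit of O_L. -/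
/-- Setup as in Statement 9: `K` local of residue characteristic `≠ 2`
with `i² = −1`, `π` a uniformizer, `u` a non-square unit, `L = K(√π,√u)` with Klein
group `G = ⟨σ,τ⟩` and Galois-invariant normalized valuation `w`, `w = 2v` on `K×`.
Every element `α·((1+τ)σβ)·((1+σ)τγ) = α·σ(β)·τσ(β)·τ(γ)·στ(γ)` (with `α ∈ K×`,
`β,γ ∈ L×`) has even valuation `w`, whereas `w(√(uπ)) = 1`; consequently `√(uπ)` is not
of this form, even up to multiplication by a unit `ν` of `O_L` (i.e. with `w(ν) = 0`). -/
theorem stmt10 {K L G : Type*} [Field K] [Field L] [Group G]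
    [MulSemiringAction G L]
    (f : K →+* L) (hf : ∀ (g : G) (x : K), g • f x = f x)
    (π u i : K) (hi : i ^ 2 = -1) (hπ0 : π ≠ 0) (hu0 : u ≠ 0)
    (hchar : (2 : K) ≠ 0) (husq : ∀ c : K, c ^ 2 ≠ u)
    (σ τ : G) (su sp : L) (hsu : su ^ 2 = f u) (hsp : sp ^ 2 = f π)
    (hσsp : σ • sp = sp) (hσsu : σ • su = -su)
    (hτsu : τ • su = su) (hτsp : τ • sp = -sp)
    (w : L → ℤ) (v : K → ℤ)
    (hw : ∀ x y : L, x ≠ 0 → y ≠ 0 → w (x * y) = w x + w y)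
    (hGal : ∀ (g : G) (δ : L), w (g • δ) = w δ)
    (hKv : ∀ α : K, α ≠ 0 → w (f α) = 2 * v α)
    (hwu : w (f u) = 0) (hwπ : w (f π) = 2) :
    (∀ (α : K) (β γ : L), α ≠ 0 → β ≠ 0 → γ ≠ 0 →
      Even (w (f α * (σ • β * (τ * σ) • β) * (τ • γ * (σ * τ) • γ)))) ∧
    w (su * sp) = 1 ∧
    ¬ ∃ (α : K) (β γ ν : L), α ≠ 0 ∧ β ≠ 0 ∧ γ ≠ 0 ∧ ν ≠ 0 ∧ w ν = 0 ∧
      su * sp = f α * (σ • β * (τ * σ) • β) * (τ • γ * (σ * τ) • γ) * ν := by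
  -- g • x ≠ 0 for x ≠ 0
  have hsz : ∀ (g : G) (x : L), x ≠ 0 → g • x ≠ 0 := by
    intro g x hx h
    apply hx
    have := congrArg (fun y => g⁻¹ • y) h
    simpa using this
  -- valuation of the general element is even
  have heven : ∀ (α : K) (β γ : L), α ≠ 0 → β ≠ 0 → γ ≠ 0 →
      Even (w (f α * (σ • β * (τ * σ) • β) * (τ • γ * (σ * τ) • γ))) := by
    intro α β γ hα hβ hγ
    have hfα : f α ≠ 0 := fun h => hα (f.injective (by simpa using h))
    have h1 : σ • β ≠ 0 := hsz _ _ hβ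
    have h2 : (τ * σ) • β ≠ 0 := hsz _ _ hβ
    have h3 : τ • γ ≠ 0 := hsz _ _ hγ
    have h4 : (σ * τ) • γ ≠ 0 := hsz _ _ hγ
    have hb : σ • β * (τ * σ) • β ≠ 0 := mul_ne_zero h1 h2
    have hc : τ • γ * (σ * τ) • γ ≠ 0 := mul_ne_zero h3 h4
    rw [hw _ _ (mul_ne_zero hfα hb) hc, hw _ _ hfα hb, hw _ _ h1 h2, hw _ _ h3 h4,
      hGal, hGal, hGal, hGal, hKv α hα]
    exact ⟨v α + w β + w γ, by ring⟩
  -- w su = 0, w sp = 1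
  have hsu0 : su ≠ 0 := by
    intro h
    apply hu0
    apply f.injective
    rw [← hsu, h]; simp
  have hsp0 : sp ≠ 0 := by
    intro h
    apply hπ0
    apply f.injective
    rw [← hsp, h]; simp
  have hwsu : w su = 0 := by
    have : w (su * su) = w su + w su := hw _ _ hsu0 hsu0
    rw [← sq, hsu, hwu] at this
    omega
  have hwsp : w sp = 1 := by
    have : w (sp * sp) = w sp + w sp := hw _ _ hsp0 hsp0
    rw [← sq, hsp, hwπ] at this
    omega
  have hwsusp : w (su * sp) = 1 := by
    rw [hw _ _ hsu0 hsp0, hwsu, hwsp]; omega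
  refine ⟨heven, hwsusp, ?_⟩
  rintro ⟨α, β, γ, ν, hα, hβ, hγ, hν, hwν, heq⟩
  have hfα : f α ≠ 0 := fun h => hα (f.injective (by simpa using h))
  have h1 : σ • β ≠ 0 := hsz _ _ hβ
  have h2 : (τ * σ) • β ≠ 0 := hsz _ _ hβ
  have h3 : τ • γ ≠ 0 := hsz _ _ hγ
  have h4 : (σ * τ) • γ ≠ 0 := hsz _ _ hγ
  have hmain : f α * (σ • β * (τ * σ) • β) * (τ • γ * (σ * τ) • γ) ≠ 0 :=
    mul_ne_zero (mul_ne_zero hfα (mul_ne_zero h1 h2)) (mul_ne_zero h3 h4)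
  have hval : w (su * sp) = w (f α * (σ • β * (τ * σ) • β) * (τ • γ * (σ * τ) • γ)) + w ν := by
    rw [heq, hw _ _ hmain hν]
  rw [hwsusp, hwν, add_zero] at hval
  obtain ⟨k, hk⟩ := heven α β γ hα hβ hγ
  omega
end

section
/- Let L/K be a totally ramified finite Galois extension of nonarchimedean local fields with group G (so e = [L:K]), and T_* a G-lattice. Then the composite map T(L) := T_* ⊗ L× → Hom((T*)^G, ℤ), obtained by applying the valuation w to get T_*⊗L× → T_* and then restricting functionals via T_* ≅ Hom(T*,ℤ) → Hom((T*)^G,ℤ), is surjective, and for every θ ∈ Hom((T*)^G, ℤ) there exists β ∈ T(L) such that the norm α = Σ_{g∈G} g·β ∈ T(K) satisfies ψ_K(α) = θ, where ψ_K is the valuation map on K-points. Consequently T(K) is generated by its maximal bounded subgroup T(O_K) together with the image of the norm N_{L/K} : T(L) → T(K). -/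
open scoped TensorProduct

lemma aux_zsmul_comm {G B : Type} [Group G] [AddCommGroup B] [DistribMulAction G B]
    (g : G) (n : ℤ) (b : B) : g • (n • b) = n • (g • b) :=
  map_zsmul (DistribMulAction.toAddMonoidHom B g) n b

lemma aux_dual_ext {M : Type} [AddCommGroup M] [Module ℤ M]
    [Module.Free ℤ M] [Module.Finite ℤ M]
    (D : Submodule ℤ (M →ₗ[ℤ] ℤ))
    (hsat : ∀ (n : ℤ) (χ : M →ₗ[ℤ] ℤ), n ≠ 0 → n • χ ∈ D → χ ∈ D)
    (θ : D →ₗ[ℤ] ℤ) : ∃ m : M, ∀ χ : D, (χ : M →ₗ[ℤ] ℤ) m = θ χ := by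
  haveI : NoZeroSMulDivisors ℤ ((M →ₗ[ℤ] ℤ) ⧸ D) := by
    constructor
    intro c x hcx
    obtain ⟨χ, rfl⟩ := D.mkQ_surjective x
    by_cases hc : c = 0
    · exact Or.inl hc
    · refine Or.inr ?_
      rw [← map_smul, Submodule.mkQ_apply, Submodule.Quotient.mk_eq_zero] at hcx
      rw [Submodule.mkQ_apply, Submodule.Quotient.mk_eq_zero]
      exact hsat c χ hc hcx
  obtain ⟨σ, hσ⟩ := Module.projective_lifting_property D.mkQ
    (LinearMap.id : ((M →ₗ[ℤ] ℤ) ⧸ D) →ₗ[ℤ] _) D.mkQ_surjective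
  have hmem : ∀ χ : M →ₗ[ℤ] ℤ, χ - σ (D.mkQ χ) ∈ D := by
    intro χ
    rw [← Submodule.Quotient.mk_eq_zero, ← Submodule.mkQ_apply, map_sub]
    have : D.mkQ (σ (D.mkQ χ)) = D.mkQ χ := by
      have := congrArg (fun f => f (D.mkQ χ)) hσ
      simpa using this
    rw [this, sub_self]
  let r : (M →ₗ[ℤ] ℤ) →ₗ[ℤ] D :=
    (LinearMap.id - σ.comp D.mkQ).codRestrict D hmem
  have hr : ∀ χ : D, r (χ : M →ₗ[ℤ] ℤ) = χ := by
    intro χ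
    apply Subtype.ext
    show (χ : M →ₗ[ℤ] ℤ) - σ (D.mkQ χ) = (χ : M →ₗ[ℤ] ℤ)
    have : D.mkQ (χ : M →ₗ[ℤ] ℤ) = 0 := by
      rw [Submodule.mkQ_apply, Submodule.Quotient.mk_eq_zero]; exact χ.2
    rw [this, map_zero, sub_zero]
  refine ⟨(Module.evalEquiv ℤ M).symm (θ.comp r), fun χ => ?_⟩
  rw [Module.apply_evalEquiv_symm_apply]
  show θ (r (χ : M →ₗ[ℤ] ℤ)) = θ χ
  rw [hr]

section Aux

variable {M A : Type} [AddCommGroup M] [Module ℤ M] [AddCommGroup A]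

/-- `χ̃ : M ⊗ A → A`. -/
noncomputable def chAux (χ : M →ₗ[ℤ] ℤ) : M ⊗[ℤ] A →ₗ[ℤ] A :=
  TensorProduct.lift ((LinearMap.lsmul ℤ A).comp χ)

/-- `deg : M ⊗ A → M` induced by `val`. -/
noncomputable def degAux (val : A →ₗ[ℤ] ℤ) :=
  TensorProduct.lift (@LinearMap.flip ℤ ℤ ℤ ℤ _ _ _ _ A M M _ _ _ _ _ _ _
        (@smulCommClass_self ℤ M _ Module.toDistribMulAction.toMulAction) _ _
        ((LinearMap.lsmul ℤ M).comp val))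

@[simp] lemma chAux_tmul (χ : M →ₗ[ℤ] ℤ) (m : M) (a : A) :
    chAux χ (m ⊗ₜ[ℤ] a) = χ m • a := by
  simp [chAux]

@[simp] lemma degAux_tmul (val : A →ₗ[ℤ] ℤ) (m : M) (a : A) :
    degAux (M := M) val (m ⊗ₜ[ℤ] a) = val a • m := by
  simp [degAux]
  exact int_smul_eq_zsmul _ _ _

lemma val_chAux (val : A →ₗ[ℤ] ℤ) (χ : M →ₗ[ℤ] ℤ) (t : M ⊗[ℤ] A) :
    val (chAux χ t) = χ (degAux val t) := by
  induction t using TensorProduct.induction_on with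
  | zero => simp
  | tmul m a => simp [mul_comm]
  | add x y hx hy => simp [map_add, hx, hy]

lemma chAux_add (χ χ' : M →ₗ[ℤ] ℤ) (t : M ⊗[ℤ] A) :
    chAux (χ + χ') t = chAux χ t + chAux χ' t := by
  induction t using TensorProduct.induction_on with
  | zero => simp
  | tmul m a => simp [add_smul]
  | add x y hx hy => simp only [map_add, hx, hy]; abel

lemma chAux_zsmul (c : ℤ) (χ : M →ₗ[ℤ] ℤ) (t : M ⊗[ℤ] A) :
    chAux (c • χ) t = c • chAux χ t := by
  induction t using TensorProduct.induction_on with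
  | zero => simp
  | tmul m a => simp [mul_smul]
  | add x y hx hy => simp only [map_add, hx, hy, smul_add]

variable {G : Type} [Group G] [Fintype G] [DistribMulAction G M] [DistribMulAction G A]
  [DistribMulAction G (M ⊗[ℤ] A)]

lemma normInvAux {B : Type} [AddCommGroup B] [DistribMulAction G B] (g : G) (β : B) :
    g • (∑ g' : G, g' • β) = ∑ g' : G, g' • β := by
  rw [Finset.smul_sum]
  exact Fintype.sum_equiv (Equiv.mulLeft g) _ _ (fun x => by simp [smul_smul])

lemma degAux_smul (val : A →ₗ[ℤ] ℤ)
    (hdiagA : ∀ (g : G) (m : M) (a : A), g • (m ⊗ₜ[ℤ] a) = (g • m) ⊗ₜ[ℤ] (g • a))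
    (hvalG : ∀ (g : G) (a : A), val (g • a) = val a)
    (g : G) (t : M ⊗[ℤ] A) :
    degAux val (g • t) = g • degAux val t := by
  induction t using TensorProduct.induction_on with
  | zero => simp
  | tmul m a => rw [hdiagA]; simp [hvalG, aux_zsmul_comm]
  | add x y hx hy => rw [smul_add, map_add, hx, hy, map_add, smul_add]

lemma chAux_smul
    (hdiagA : ∀ (g : G) (m : M) (a : A), g • (m ⊗ₜ[ℤ] a) = (g • m) ⊗ₜ[ℤ] (g • a))
    (χ : M →ₗ[ℤ] ℤ) (hχ : ∀ (g : G) (m : M), χ (g • m) = χ m)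
    (g : G) (t : M ⊗[ℤ] A) :
    chAux χ (g • t) = g • chAux χ t := by
  induction t using TensorProduct.induction_on with
  | zero => simp
  | tmul m a => rw [hdiagA]; simp [hχ, aux_zsmul_comm]
  | add x y hx hy => rw [smul_add, map_add, hx, hy, map_add, smul_add]

lemma degAux_rid (val : A →ₗ[ℤ] ℤ) (t : M ⊗[ℤ] A) :
    degAux val t = TensorProduct.rid ℤ M (LinearMap.lTensor M val t) := by
  induction t using TensorProduct.induction_on with
  | zero => simp
  | tmul m a =>
    simp only [degAux_tmul, LinearMap.lTensor_tmul, TensorProduct.rid_tmul]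
    exact (int_smul_eq_zsmul _ _ _).symm
  | add x y hx hy => simp [map_add, hx, hy]

end Aux

/-- Abstract form for a totally ramified Galois extension `L/K` of local
fields (`e = [L:K] = |G|`): with `M = T_*` a `G`-lattice, `A = L×` (additively),
`U = O_L×`, `val` the normalized valuation of `L`, `vK` that of `K` on `A^G = K×` with
`val = e·vK` on invariants, and `D = (T^*)^G` the submodule of `G`-invariant
characters `χ : M → ℤ`:
(i) the composite `T(L) = M ⊗ A → Hom((T^*)^G, ℤ)`, `β ↦ (χ ↦ χ(deg β))`, is
surjective;
(ii) for every `θ ∈ Hom((T^*)^G, ℤ)` there is `β ∈ T(L)` whose norm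
`α = ∑_{g∈G} g·β ∈ T(K)` satisfies `ψ_K(α) = θ`, i.e. `vK(χ̃(α)) = θ(χ)` for all
`χ ∈ D`;
(iii) consequently every `G`-invariant `t ∈ T(K) = (M ⊗ A)^G` is the sum of an element
of `T(O_K) = (M ⊗ U)^G` and a norm `∑_{g∈G} g·β`. -/
theorem stmt17 {G M A U : Type} [Group G] [Fintype G]
    [AddCommGroup M] [Module ℤ M] [Module.Free ℤ M] [Module.Finite ℤ M]
    [AddCommGroup A] [AddCommGroup U]
    [DistribMulAction G M] [DistribMulAction G A] [DistribMulAction G U]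
    (ι : U →ₗ[ℤ] A) (hιinj : Function.Injective ι)
    (hιG : ∀ (g : G) (u : U), ι (g • u) = g • ι u)
    (val : A →ₗ[ℤ] ℤ) (hvalsurj : Function.Surjective val)
    (hvalG : ∀ (g : G) (a : A), val (g • a) = val a)
    (hexact : Function.Exact ι val)
    [DistribMulAction G (M ⊗[ℤ] A)]
    (hdiagA : ∀ (g : G) (m : M) (a : A), g • (m ⊗ₜ[ℤ] a) = (g • m) ⊗ₜ[ℤ] (g • a))
    [DistribMulAction G (M ⊗[ℤ] U)]
    (hdiagU : ∀ (g : G) (m : M) (u : U), g • (m ⊗ₜ[ℤ] u) = (g • m) ⊗ₜ[ℤ] (g • u))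
    (e : ℤ) (hram : e = (Fintype.card G : ℤ))
    (vK : {a : A // ∀ g : G, g • a = a} → ℤ)
    (hE : ∀ (a : A) (h : ∀ g : G, g • a = a), val a = e * vK ⟨a, h⟩)
    (D : Submodule ℤ (M →ₗ[ℤ] ℤ))
    (hD : ∀ χ : M →ₗ[ℤ] ℤ, χ ∈ D ↔ ∀ (g : G) (m : M), χ (g • m) = χ m) :
    (∀ θ : D →ₗ[ℤ] ℤ, ∃ β : M ⊗[ℤ] A, ∀ χ : D,
      (χ : M →ₗ[ℤ] ℤ) (TensorProduct.lift (@LinearMap.flip ℤ ℤ ℤ ℤ _ _ _ _ A M M _ _ _ _ _ _ _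
        (@smulCommClass_self ℤ M _ Module.toDistribMulAction.toMulAction) _ _
        ((LinearMap.lsmul ℤ M).comp val)) β)
        = θ χ) ∧
    (∀ θ : D →ₗ[ℤ] ℤ, ∃ β : M ⊗[ℤ] A, ∀ χ : D,
      ∃ h : ∀ g : G,
          g • TensorProduct.lift ((LinearMap.lsmul ℤ A).comp (χ : M →ₗ[ℤ] ℤ))
              (∑ g' : G, g' • β) =
            TensorProduct.lift ((LinearMap.lsmul ℤ A).comp (χ : M →ₗ[ℤ] ℤ))
              (∑ g' : G, g' • β),
        vK ⟨TensorProduct.lift ((LinearMap.lsmul ℤ A).comp (χ : M →ₗ[ℤ] ℤ))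
              (∑ g' : G, g' • β), h⟩ = θ χ) ∧
    (∀ t : M ⊗[ℤ] A, (∀ g : G, g • t = t) →
      ∃ (y : M ⊗[ℤ] U) (β : M ⊗[ℤ] A), (∀ g : G, g • y = y) ∧
        t = LinearMap.lTensor M ι y + ∑ g : G, g • β) := by
  -- saturation of D
  have hsat : ∀ (n : ℤ) (χ : M →ₗ[ℤ] ℤ), n ≠ 0 → n • χ ∈ D → χ ∈ D := by
    intro n χ hn hmem
    rw [hD] at hmem ⊢
    intro g m
    have h1 := hmem g m
    simp only [LinearMap.smul_apply, smul_eq_mul] at h1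
    exact mul_left_cancel₀ hn h1
  have hcard : (Fintype.card G : ℤ) ≠ 0 := by exact_mod_cast Fintype.card_ne_zero
  have he0 : e ≠ 0 := by rw [hram]; exact hcard
  obtain ⟨a0, ha0⟩ := hvalsurj 1
  have hreal : ∀ θ : D →ₗ[ℤ] ℤ, ∃ m0 : M, ∀ χ : D, (χ : M →ₗ[ℤ] ℤ) m0 = θ χ :=
    fun θ => aux_dual_ext D hsat θ
  have hχprop : ∀ χ : D, ∀ (g : G) (m : M), (χ : M →ₗ[ℤ] ℤ) (g • m) = (χ : M →ₗ[ℤ] ℤ) m :=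
    fun χ => (hD _).mp χ.2
  have hch_inv : ∀ (χ : D) (u : M ⊗[ℤ] A), (∀ g : G, g • u = u) →
      ∀ g : G, g • chAux (χ : M →ₗ[ℤ] ℤ) u = chAux (χ : M →ₗ[ℤ] ℤ) u := by
    intro χ u hu g
    rw [← chAux_smul hdiagA _ (hχprop χ) g u, hu g]
  have hdegβ : ∀ m0 : M, degAux (M := M) val (m0 ⊗ₜ[ℤ] a0) = m0 := by
    intro m0
    rw [degAux_tmul, ha0, one_zsmul]
  have hvalα : ∀ (χ : D) (m0 : M),
      val (chAux (χ : M →ₗ[ℤ] ℤ) (∑ g : G, g • (m0 ⊗ₜ[ℤ] a0)))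
        = (Fintype.card G : ℤ) * (χ : M →ₗ[ℤ] ℤ) m0 := by
    intro χ m0
    rw [map_sum, map_sum]
    have h2 : ∀ g : G, val (chAux (χ : M →ₗ[ℤ] ℤ) (g • (m0 ⊗ₜ[ℤ] a0)))
        = (χ : M →ₗ[ℤ] ℤ) m0 := by
      intro g
      rw [val_chAux, degAux_smul val hdiagA hvalG]
      rw [hdegβ m0, hχprop χ]
    rw [Finset.sum_congr rfl (fun g _ => h2 g)]
    simp [Finset.sum_const, Finset.card_univ, mul_comm]
  have hkey : ∀ (θ : D →ₗ[ℤ] ℤ) (m0 : M), (∀ χ : D, (χ : M →ₗ[ℤ] ℤ) m0 = θ χ) →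
      ∀ χ : D, ∃ h : ∀ g : G,
          g • chAux (χ : M →ₗ[ℤ] ℤ) (∑ g' : G, g' • (m0 ⊗ₜ[ℤ] a0))
            = chAux (χ : M →ₗ[ℤ] ℤ) (∑ g' : G, g' • (m0 ⊗ₜ[ℤ] a0)),
        vK ⟨chAux (χ : M →ₗ[ℤ] ℤ) (∑ g' : G, g' • (m0 ⊗ₜ[ℤ] a0)), h⟩ = θ χ := by
    intro θ m0 hm0 χ
    refine ⟨fun g => hch_inv χ _ (fun g' => normInvAux g' _) g, ?_⟩
    apply mul_left_cancel₀ he0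
    rw [← hE _ _, hvalα χ m0, hm0 χ, hram]
  refine ⟨?_, ?_, ?_⟩
  · -- part (i)
    intro θ
    obtain ⟨m0, hm0⟩ := hreal θ
    refine ⟨m0 ⊗ₜ[ℤ] a0, fun χ => ?_⟩
    show (χ : M →ₗ[ℤ] ℤ) (degAux val (m0 ⊗ₜ[ℤ] a0)) = θ χ
    rw [hdegβ m0, hm0 χ]
  · -- part (ii)
    intro θ
    obtain ⟨m0, hm0⟩ := hreal θ
    exact ⟨m0 ⊗ₜ[ℤ] a0, hkey θ m0 hm0⟩
  · -- part (iii)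
    intro t ht
    have hinvt : ∀ χ : D, ∀ g : G, g • chAux (χ : M →ₗ[ℤ] ℤ) t = chAux (χ : M →ₗ[ℤ] ℤ) t :=
      fun χ g => hch_inv χ t ht g
    have hθe : ∀ χ : D, val (chAux (χ : M →ₗ[ℤ] ℤ) t)
        = e * vK ⟨chAux (χ : M →ₗ[ℤ] ℤ) t, hinvt χ⟩ := fun χ => hE _ _
    let θ : D →ₗ[ℤ] ℤ :=
      { toFun := fun χ => vK ⟨chAux (χ : M →ₗ[ℤ] ℤ) t, hinvt χ⟩
        map_add' := by
          intro χ χ'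
          apply mul_left_cancel₀ he0
          rw [mul_add, ← hθe, ← hθe, ← hθe]
          show val (chAux ((χ : M →ₗ[ℤ] ℤ) + (χ' : M →ₗ[ℤ] ℤ)) t) = _
          rw [chAux_add, map_add]
        map_smul' := by
          intro c χ
          simp only [RingHom.id_apply, smul_eq_mul]
          apply mul_left_cancel₀ he0
          rw [← hθe]
          show val (chAux (c • (χ : M →ₗ[ℤ] ℤ)) t) = e * (c * vK ⟨chAux (χ : M →ₗ[ℤ] ℤ) t, hinvt χ⟩)
          rw [chAux_zsmul, map_smul, smul_eq_mul, hθe χ]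
          ring }
    obtain ⟨m0, hm0⟩ := hreal θ
    have hdeg0 : ∀ χ : D, (χ : M →ₗ[ℤ] ℤ)
        (degAux val (t - ∑ g : G, g • (m0 ⊗ₜ[ℤ] a0))) = 0 := by
      intro χ
      rw [map_sub, map_sub]
      have h1 : (χ : M →ₗ[ℤ] ℤ) (degAux val t) = e * θ χ := by
        rw [← val_chAux, hθe χ]; rfl
      have h2 : (χ : M →ₗ[ℤ] ℤ) (degAux val (∑ g : G, g • (m0 ⊗ₜ[ℤ] a0))) = e * θ χ := by
        rw [← val_chAux, hvalα χ m0, hm0 χ, hram]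
      rw [h1, h2, sub_self]
    have hdinv : ∀ g : G, g • degAux val (t - ∑ g : G, g • (m0 ⊗ₜ[ℤ] a0))
        = degAux val (t - ∑ g : G, g • (m0 ⊗ₜ[ℤ] a0)) := by
      intro g
      rw [← degAux_smul val hdiagA hvalG, smul_sub, ht g, normInvAux g (m0 ⊗ₜ[ℤ] a0)]
    have hall : ∀ χ0 : M →ₗ[ℤ] ℤ, χ0 (degAux val (t - ∑ g : G, g • (m0 ⊗ₜ[ℤ] a0))) = 0 := by
      intro χ0
      let N : M →ₗ[ℤ] ℤ :=
        { toFun := fun m => ∑ g : G, χ0 (g • m)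
          map_add' := by intro x y; simp [smul_add, map_add, Finset.sum_add_distrib]
          map_smul' := by
            intro c x
            simp only [RingHom.id_apply, smul_eq_mul, Finset.mul_sum]
            refine Finset.sum_congr rfl (fun g _ => ?_)
            have h1 := Int.cast_smul_eq_zsmul ℤ c x
            simp only [Int.cast_id] at h1
            rw [h1, aux_zsmul_comm g c x, map_zsmul χ0 c (g • x), zsmul_eq_mul]
            simp [Int.cast_id] }
      have hN : N ∈ D := by
        rw [hD]
        intro g m
        show ∑ g' : G, χ0 (g' • g • m) = ∑ g' : G, χ0 (g' • m)
        exact Fintype.sum_equiv (Equiv.mulRight g) _ _ (fun x => by simp [mul_smul])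
      have h4 := hdeg0 ⟨N, hN⟩
      have h5 : ∑ g : G, χ0 (g • degAux val (t - ∑ g : G, g • (m0 ⊗ₜ[ℤ] a0)))
          = (Fintype.card G : ℤ) * χ0 (degAux val (t - ∑ g : G, g • (m0 ⊗ₜ[ℤ] a0))) := by
        rw [Finset.sum_congr rfl (fun g _ => by rw [hdinv g])]
        simp [Finset.sum_const, Finset.card_univ, mul_comm]
        ring
      have h6 : (Fintype.card G : ℤ) * χ0 (degAux val (t - ∑ g : G, g • (m0 ⊗ₜ[ℤ] a0))) = 0 := by
        rw [← h5]; exact h4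
      rcases mul_eq_zero.mp h6 with h | h
      · exact absurd h hcard
      · exact h
    have hdz : degAux val (t - ∑ g : G, g • (m0 ⊗ₜ[ℤ] a0)) = 0 := by
      have h7 : Module.Dual.eval ℤ M (degAux val (t - ∑ g : G, g • (m0 ⊗ₜ[ℤ] a0))) = 0 := by
        ext χ0
        rw [Module.Dual.eval_apply, hall χ0, LinearMap.zero_apply]
      have h8 := (Module.bijective_dual_eval ℤ M).injective
      apply h8
      rw [h7, map_zero]
    have hker : LinearMap.lTensor M val (t - ∑ g : G, g • (m0 ⊗ₜ[ℤ] a0)) = 0 := by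
      apply (TensorProduct.rid ℤ M).injective
      rw [← degAux_rid, hdz, map_zero]
    have hexact2 : Function.Exact (LinearMap.lTensor M ι) (LinearMap.lTensor M val) :=
      Module.Flat.lTensor_exact M hexact
    obtain ⟨y, hy⟩ := (hexact2 (t - ∑ g : G, g • (m0 ⊗ₜ[ℤ] a0))).mp hker
    have hltg : ∀ (g : G) (z : M ⊗[ℤ] U),
        LinearMap.lTensor M ι (g • z) = g • LinearMap.lTensor M ι z := by
      intro g z
      induction z using TensorProduct.induction_on with
      | zero => simp
      | tmul m u =>
        rw [hdiagU, LinearMap.lTensor_tmul, LinearMap.lTensor_tmul, hιG, ← hdiagA]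
      | add x y hx hy => rw [smul_add, map_add, hx, hy, map_add, smul_add]
    have hyinv : ∀ g : G, g • y = y := by
      intro g
      apply Module.Flat.lTensor_preserves_injective_linearMap (M := M) ι hιinj
      rw [hltg, hy, smul_sub, ht g, normInvAux g (m0 ⊗ₜ[ℤ] a0)]
    refine ⟨y, m0 ⊗ₜ[ℤ] a0, hyinv, ?_⟩
    rw [hy]
    abel
end
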